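/- Let s ≥ t ≥ 6 be integers. Every (s,t)-path has an (s−2, t−6)-path as a pivot-minor. -/

import Mathlib

open SimpleGraph

universe u v

/-! ### Basic graph operations: flips, local complementation, pivoting, pivot-minors -/

/-- Flip the adjacency of `G` exactly at the pairs of distinct vertices where the
(symmetrized) predicate `p` holds. -/
def sdFlip {V : Type u} (G : SimpleGraph V) (p : V → V → Prop) : SimpleGraph V where
  Adj x y := x ≠ y ∧ Xor' (G.Adj x y) (p x y ∨ p y x)
  symm := by
    constructor
    intro x y h
    refine ⟨h.1.symm, ?_⟩
    have h2 := h.2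
    rwa [G.adj_comm x y, or_comm] at h2
  loopless := by
    constructor
    intro x h
    exact h.1 rfl

/-- Local complementation `G * v`: complement the adjacency inside the neighborhood of `v`. -/
def localComp {V : Type u} (G : SimpleGraph V) (v : V) : SimpleGraph V :=
  sdFlip G (fun x y => G.Adj v x ∧ G.Adj v y)

/-- Pivoting an edge `uv`: `G ∧ uv = G * u * v * u`. -/
def pivot {V : Type u} (G : SimpleGraph V) (u v : V) : SimpleGraph V :=
  localComp (localComp (localComp G u) v) u

/-- Applying a sequence of pivots. -/
def pivotSeq {V : Type u} (G : SimpleGraph V) : List (V × V) → SimpleGraph V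
  | [] => G
  | e :: l => pivotSeq (pivot G e.1 e.2) l

/-- Each pivot in the sequence is performed on an edge of the current graph. -/
def ValidPivots {V : Type u} (G : SimpleGraph V) : List (V × V) → Prop
  | [] => True
  | e :: l => G.Adj e.1 e.2 ∧ ValidPivots (pivot G e.1 e.2) l

/-- `H` is a pivot-minor of `G`: `H` is isomorphic to a graph obtained from `G` by a sequence of
pivotings (on edges of the current graph) and vertex deletions. -/
def IsPivotMinorOf {W : Type v} {V : Type u} (H : SimpleGraph W) (G : SimpleGraph V) : Prop :=
  ∃ (l : List (V × V)) (S : Set V), ValidPivots G l ∧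
    Nonempty (H ≃g (pivotSeq G l).induce S)

/-! ### The half-graph join `G △ H` -/

/-- `G △ H`: the disjoint union of `G` and `H` together with the half graph joining them:
the `i`-th vertex of `G` is adjacent to the `j`-th vertex of `H` iff `i ≥ j`. -/
def halfJoin {n : ℕ} (G H : SimpleGraph (Fin n)) : SimpleGraph (Fin n ⊕ Fin n) where
  Adj x y :=
    match x, y with
    | Sum.inl i, Sum.inl i' => G.Adj i i'
    | Sum.inr j, Sum.inr j' => H.Adj j j'
    | Sum.inl i, Sum.inr j => j ≤ i
    | Sum.inr j, Sum.inl i => j ≤ i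
  symm := by
    constructor
    rintro (i | i) (j | j) h
    · exact h.symm
    · exact h
    · exact h
    · exact h.symm
  loopless := by
    constructor
    rintro (i | i) h
    · exact G.ne_of_adj h rfl
    · exact H.ne_of_adj h rfl

/-! ### Flips by a set, by a pair of sets, and by a collection of sets -/

/-- The `X`-flip of `G`: complement the adjacency inside `X`. (The `∅`-flip is `G` itself.) -/
def setFlip {V : Type u} (G : SimpleGraph V) (X : Set V) : SimpleGraph V :=
  sdFlip G (fun x y => x ∈ X ∧ y ∈ X)

/-- `G * (X, Y)`: complement the adjacency between `X` and `Y`. -/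
def pairFlip {V : Type u} (G : SimpleGraph V) (X Y : Set V) : SimpleGraph V :=
  sdFlip G (fun x y => x ∈ X ∧ y ∈ Y)

open Classical in
/-- The member of the collection `P` containing `v`, if any, and `{v}` otherwise. -/
noncomputable def blockOf {V : Type u} (P : Set (Set V)) (v : V) : Set V :=
  if h : ∃ X ∈ P, v ∈ X then h.choose else {v}

/-- A subset `F ⊆ P²` is symmetric if `(X,X') ∈ F` implies `(X',X) ∈ F`. -/
def SymmRelSet {α : Type u} (F : Set (α × α)) : Prop :=
  ∀ a b : α, (a, b) ∈ F → (b, a) ∈ F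

/-- The `(P,F)`-flip `H ⊕ (P,F)` of `H`: distinct vertices `u,v` are adjacent iff
`H.Adj u v` XOR `(P(u), P(v)) ∈ F`. -/
noncomputable def collFlip {V : Type u} (H : SimpleGraph V) (P : Set (Set V))
    (F : Set (Set V × Set V)) : SimpleGraph V :=
  sdFlip H (fun x y => (blockOf P x, blockOf P y) ∈ F)

/-- `P` is a collection of pairwise disjoint non-empty subsets. -/
def IsDisjNonemptyColl {V : Type u} (P : Set (Set V)) : Prop :=
  (∀ X ∈ P, X.Nonempty) ∧ P.PairwiseDisjoint id

/-- `Q` is a coarsening of `P`: a collection of disjoint non-empty sets,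
each a union of members of `P`. -/
def IsCoarsening {α : Type u} (Q P : Set (Set α)) : Prop :=
  IsDisjNonemptyColl Q ∧ ∀ X ∈ Q, ∃ C ⊆ P, X = ⋃₀ C

/-! ### The graph `mPₙ` and flipped `mPₙ`'s -/

/-- `mPₙ`: the disjoint union of `m` copies of the path `Pₙ`, with vertex set `[m] × [n]`. -/
def pathsGraph (m n : ℕ) : SimpleGraph (Fin m × Fin n) where
  Adj x y := x.1 = y.1 ∧ (pathGraph n).Adj x.2 y.2
  symm := by
    constructor
    rintro ⟨i, a⟩ ⟨j, b⟩ ⟨h1, h2⟩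
    exact ⟨h1.symm, h2.symm⟩
  loopless := by
    constructor
    rintro ⟨i, a⟩ ⟨_, h⟩
    exact (pathGraph n).ne_of_adj h rfl

/-- The `j`-th column of `mPₙ`. -/
def column (m n : ℕ) (j : Fin n) : Set (Fin m × Fin n) := {p | p.2 = j}

/-- The column set of `mPₙ`. -/
def columnSet (m n : ℕ) : Set (Set (Fin m × Fin n)) := Set.range (column m n)

/-- A flipped `mPₙ`: a `P`-flip of `mPₙ` where `P` is a coarsening of the column set. -/
def IsFlippedPaths (m n : ℕ) (G : SimpleGraph (Fin m × Fin n)) : Prop :=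
  ∃ (P : Set (Set (Fin m × Fin n))) (F : Set (Set (Fin m × Fin n) × Set (Fin m × Fin n))),
    IsCoarsening P (columnSet m n) ∧ F ⊆ P ×ˢ P ∧ SymmRelSet F ∧
    G = collFlip (pathsGraph m n) P F

/-- A `k`-flipped `mPₙ`: a flipped `mPₙ` with `|P| ≤ k`. -/
def IsKFlippedPaths (k m n : ℕ) (G : SimpleGraph (Fin m × Fin n)) : Prop :=
  ∃ (P : Set (Set (Fin m × Fin n))) (F : Set (Set (Fin m × Fin n) × Set (Fin m × Fin n))),
    IsCoarsening P (columnSet m n) ∧ P.ncard ≤ k ∧ F ⊆ P ×ˢ P ∧ SymmRelSet F ∧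
    G = collFlip (pathsGraph m n) P F

/-! ### Cut-rank and rank-depth -/

open Classical in
/-- The cut-rank `ρ_G(S)`: the rank over GF(2) of the `S × (V ∖ S)` submatrix of the
adjacency matrix of `G`. -/
noncomputable def cutRank {V : Type u} [Fintype V] (G : SimpleGraph V) (S : Set V) : ℕ :=
  Matrix.rank (Matrix.of fun (i : S) (j : (Sᶜ : Set V)) =>
    if G.Adj (i : V) (j : V) then (1 : ZMod 2) else 0)

/-- The rank-depth of `G`: the least `k` such that `G` has a decomposition `(T, σ)` into a
tree `T` with the vertices of `G` identified with the leaves of `T` via `σ`, of width at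
most `k` and radius at most `k`.  The width condition is expressed as: for every non-leaf
node `v` of `T` and every set `S ⊆ V(G)` that is a union of parts of the partition of `V(G)`
induced by the components of `T - v`, we have `ρ_G(S) ≤ k`. -/
noncomputable def rankDepth {V : Type u} [Fintype V] (G : SimpleGraph V) : ℕ :=
  sInf {k : ℕ |
    ∃ (N : ℕ) (T : SimpleGraph (Fin N))
      (σ : V ≃ {x : Fin N // (T.neighborSet x).ncard ≤ 1}),
      T.IsTree ∧
      (∃ c : Fin N, ∀ x : Fin N, T.dist c x ≤ k) ∧
      (∀ x : Fin N, 1 < (T.neighborSet x).ncard →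
        ∀ S : Set V,
          (∀ a b : V, a ∈ S →
            (∃ w : T.Walk ((σ a : {x : Fin N // (T.neighborSet x).ncard ≤ 1}) : Fin N)
                ((σ b : {x : Fin N // (T.neighborSet x).ncard ≤ 1}) : Fin N),
              x ∉ w.support) → b ∈ S) →
          cutRank G S ≤ k)}

/-! ### Restrictions of collections, and the sets `C_F`, `L_F`, `R_F`, `D_F` -/

/-- The restriction `P|_{S}` of a collection of subsets of `V` to a subset `S`. -/
def restrictColl {V : Type u} (P : Set (Set V)) (S : Set V) : Set (Set S) :=
  {Y | ∃ X ∈ P, (Subtype.val ⁻¹' X : Set S).Nonempty ∧ Y = (Subtype.val ⁻¹' X : Set S)}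

/-- The restriction `F|_{S}` of a collection of pairs of subsets of `V` to a subset `S`. -/
def restrictF {V : Type u} (F : Set (Set V × Set V)) (S : Set V) : Set (Set S × Set S) :=
  {q | ∃ p ∈ F, (Subtype.val ⁻¹' p.1 : Set S).Nonempty ∧ (Subtype.val ⁻¹' p.2 : Set S).Nonempty ∧
      q = ((Subtype.val ⁻¹' p.1 : Set S), (Subtype.val ⁻¹' p.2 : Set S))}

/-- `C_F(X,X') = {Y ∈ P : (X,Y) ∈ F and (X',Y) ∈ F}`. -/
def CF {V : Type u} (P : Set (Set V)) (F : Set (Set V × Set V)) (X X' : Set V) : Set (Set V) :=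
  {Y ∈ P | (X, Y) ∈ F ∧ (X', Y) ∈ F}

/-- `L_F(X,X') = {Y ∈ P : (X,Y) ∈ F and (X',Y) ∉ F}`. -/
def LF {V : Type u} (P : Set (Set V)) (F : Set (Set V × Set V)) (X X' : Set V) : Set (Set V) :=
  {Y ∈ P | (X, Y) ∈ F ∧ (X', Y) ∉ F}

/-- `R_F(X,X') = {Y ∈ P : (X,Y) ∉ F and (X',Y) ∈ F}`. -/
def RF {V : Type u} (P : Set (Set V)) (F : Set (Set V × Set V)) (X X' : Set V) : Set (Set V) :=
  {Y ∈ P | (X, Y) ∉ F ∧ (X', Y) ∈ F}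

/-- `D_F(X,X') = (C×L) ∪ (C×R) ∪ (L×R) ∪ (L×C) ∪ (R×C) ∪ (R×L)`. -/
def DF {V : Type u} (P : Set (Set V)) (F : Set (Set V × Set V)) (X X' : Set V) :
    Set (Set V × Set V) :=
  (CF P F X X' ×ˢ LF P F X X') ∪ (CF P F X X' ×ˢ RF P F X X') ∪ (LF P F X X' ×ˢ RF P F X X') ∪
  (LF P F X X' ×ˢ CF P F X X') ∪ (RF P F X X' ×ˢ CF P F X X') ∪ (RF P F X X' ×ˢ LF P F X X')

/-- The set of `t` consecutive vertices of the path `P_s` starting at position `i` (0-indexed). -/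
def consec (s i t : ℕ) : Set (Fin s) := {x | i ≤ (x : ℕ) ∧ (x : ℕ) < i + t}

/-- An `(s,t)`-path: a graph isomorphic to the `X`-flip of `P_s` for a set `X` of `t`
consecutive vertices of `P_s`. -/
def IsSTPath (s t : ℕ) {W : Type v} (G : SimpleGraph W) : Prop :=
  ∃ i : ℕ, i + t ≤ s ∧ Nonempty (G ≃g setFlip (pathGraph s) (consec s i t))


/-! Let `X = {x_i, …, x_{i+t-1}}` be the flipped block of `P_s`. As `t ≥ 6`, the vertices
`x_{i+1}` and `x_{i+4}` are adjacent in the `X`-flip, and pivoting this edge amounts to three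
further set-flips, by the successive neighbourhoods `{x_{i+3}, …, x_{i+t-1}}`,
`{x_i, x_{i+1}, x_{i+2}, x_{i+3}, x_{i+5}}` and `{x_i, x_{i+2}, x_{i+4}} ∪ {x_{i+6}, …, x_{i+t-1}}`.
After deleting `x_{i+1}` and `x_{i+4}`, what remains is the path
`x_0, …, x_i, x_{i+2}, x_{i+3}, x_{i+5}, x_{i+6}, …, x_{s-1}`
flipped on `{x_{i+6}, …, x_{i+t-1}}`. -/

theorem sdFlip_adj {V : Type*} {G : SimpleGraph V} {p : V → V → Prop} {x y : V} :
    (sdFlip G p).Adj x y ↔ x ≠ y ∧ Xor (G.Adj x y) (p x y ∨ p y x) := Iff.rfl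

theorem setFlip_adj {V : Type*} {G : SimpleGraph V} {X : Set V} {x y : V} :
    (setFlip G X).Adj x y ↔ x ≠ y ∧ Xor (G.Adj x y) (x ∈ X ∧ y ∈ X) := by
  simp only [setFlip, sdFlip_adj, and_comm (a := y ∈ X), or_self]

theorem localComp_eq_setFlip {V : Type*} (G : SimpleGraph V) (v : V) :
    localComp G v = setFlip G (G.neighborSet v) := rfl

section PivotMinor

variable {U : Type*} {V : Type*} {W : Type*} {G : SimpleGraph V} {G' : SimpleGraph W}
  {H : SimpleGraph U}

def SimpleGraph.Iso.pivotCongr (e : G ≃g G') (a b : V) :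
    pivot G a b ≃g pivot G' (e a) (e b) where
  toEquiv := e.toEquiv
  map_rel_iff' := by
    intro x y
    simp only [pivot, localComp, sdFlip_adj, RelIso.coe_fn_toEquiv, e.map_adj_iff, ne_eq,
      EmbeddingLike.apply_eq_iff_eq]

theorem ValidPivots.map_iso (e : G ≃g G') {l : List (V × V)} (hl : ValidPivots G l) :
    ValidPivots G' (l.map (Prod.map e e)) ∧
      Nonempty (pivotSeq G l ≃g pivotSeq G' (l.map (Prod.map e e))) := by
  induction l generalizing G G' with
  | nil => exact ⟨trivial, ⟨e⟩⟩
  | cons ab l ih =>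
    obtain ⟨hab, hl⟩ := hl
    obtain ⟨hl', ⟨e'⟩⟩ := ih (e.pivotCongr ab.1 ab.2) hl
    exact ⟨⟨e.map_adj_iff.mpr hab, hl'⟩, ⟨e'⟩⟩

theorem isPivotMinorOf_iff_isIndContained :
    IsPivotMinorOf H G ↔ ∃ l, ValidPivots G l ∧ H ⊴ pivotSeq G l := by
  simp only [IsPivotMinorOf, isIndContained_iff_exists_iso_induce, exists_and_left]

theorem IsPivotMinorOf.trans_iso (h : IsPivotMinorOf H G) (e : G ≃g G') :
    IsPivotMinorOf H G' := by
  rw [isPivotMinorOf_iff_isIndContained] at h ⊢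
  obtain ⟨l, hl, hH⟩ := h
  obtain ⟨hl', ⟨e'⟩⟩ := hl.map_iso e
  exact ⟨_, hl', hH.trans e'.isIndContained⟩

theorem isPivotMinorOf_of_isIndContained_pivot {u v : V} (huv : G.Adj u v)
    (h : H ⊴ pivot G u v) : IsPivotMinorOf H G :=
  isPivotMinorOf_iff_isIndContained.mpr ⟨[(u, v)], ⟨huv, trivial⟩, h⟩

end PivotMinor

section FlippedPath

variable {s i t : ℕ}

theorem mem_consec {x : Fin s} : x ∈ consec s i t ↔ i ≤ (x : ℕ) ∧ (x : ℕ) < i + t := Iff.rfl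

theorem flipPath_adj {x y : Fin s} :
    (setFlip (pathGraph s) (consec s i t)).Adj x y ↔
      x ≠ y ∧ Xor ((x : ℕ) + 1 = y ∨ (y : ℕ) + 1 = x) (x ∈ consec s i t ∧ y ∈ consec s i t) := by
  rw [setFlip_adj, pathGraph_adj]

def pivotSecondFlip (s i : ℕ) : Set (Fin s) := Fin.val ⁻¹' {i, i + 1, i + 2, i + 3, i + 5}

def pivotThirdFlip (s i t : ℕ) : Set (Fin s) :=
  Fin.val ⁻¹' {i, i + 2, i + 4} ∪ consec s (i + 6) (t - 6)

theorem neighborSet_flipPath (hit : i + t ≤ s) (ht : 6 ≤ t) :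
    (setFlip (pathGraph s) (consec s i t)).neighborSet ⟨i + 1, by omega⟩ =
      consec s (i + 3) (t - 3) := by
  ext x
  simp only [mem_neighborSet, flipPath_adj, mem_consec, ne_eq, Fin.ext_iff, xor_iff_iff_not]
  omega

theorem neighborSet_flipPath_flip (hit : i + t ≤ s) (ht : 6 ≤ t) :
    (setFlip (setFlip (pathGraph s) (consec s i t)) (consec s (i + 3) (t - 3))).neighborSet
      ⟨i + 4, by omega⟩ = pivotSecondFlip s i := by
  ext x
  simp only [mem_neighborSet, setFlip_adj, pathGraph_adj, mem_consec, pivotSecondFlip,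
    Set.mem_preimage, Set.mem_insert_iff, Set.mem_singleton_iff, ne_eq, Fin.ext_iff,
    xor_iff_iff_not]
  omega

theorem neighborSet_flipPath_flip_flip (hit : i + t ≤ s) (ht : 6 ≤ t) :
    (setFlip (setFlip (setFlip (pathGraph s) (consec s i t)) (consec s (i + 3) (t - 3)))
      (pivotSecondFlip s i)).neighborSet ⟨i + 1, by omega⟩ = pivotThirdFlip s i t := by
  ext x
  simp only [mem_neighborSet, setFlip_adj, pathGraph_adj, mem_consec, pivotSecondFlip,
    pivotThirdFlip, Set.mem_union, Set.mem_preimage, Set.mem_insert_iff, Set.mem_singleton_iff,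
    ne_eq, Fin.ext_iff, xor_iff_iff_not, true_or, or_true, true_and]
  omega

theorem pivot_flipPath (hit : i + t ≤ s) (ht : 6 ≤ t) :
    pivot (setFlip (pathGraph s) (consec s i t)) ⟨i + 1, by omega⟩ ⟨i + 4, by omega⟩ =
      setFlip (setFlip (setFlip (setFlip (pathGraph s) (consec s i t)) (consec s (i + 3) (t - 3)))
        (pivotSecondFlip s i)) (pivotThirdFlip s i t) := by
  simp only [pivot, localComp_eq_setFlip]
  rw [neighborSet_flipPath hit ht, neighborSet_flipPath_flip hit ht,
    neighborSet_flipPath_flip_flip hit ht]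

/-- Enumerates `ℕ ∖ {i + 1, i + 4}` in increasing order. -/
def skipPivotEnds (i j : ℕ) : ℕ := if j ≤ i then j else if j ≤ i + 2 then j + 1 else j + 2

theorem flipPath_isIndContained_pivot (hit : i + t ≤ s) (ht : 6 ≤ t) :
    setFlip (pathGraph (s - 2)) (consec (s - 2) (i + 4) (t - 6)) ⊴
      pivot (setFlip (pathGraph s) (consec s i t)) ⟨i + 1, by omega⟩ ⟨i + 4, by omega⟩ := by
  rw [pivot_flipPath hit ht]
  refine ⟨⟨⟨fun j => ⟨skipPivotEnds i j, ?_⟩, fun a b hab => ?_⟩, fun {a b} => ?_⟩⟩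
  · unfold skipPivotEnds; split_ifs <;> omega
  · simp only [Fin.mk.injEq, skipPivotEnds] at hab
    ext
    split_ifs at hab <;> omega
  · simp only [Function.Embedding.coeFn_mk, setFlip_adj, pathGraph_adj, mem_consec,
      pivotSecondFlip, pivotThirdFlip, Set.mem_union, Set.mem_preimage, Set.mem_insert_iff,
      Set.mem_singleton_iff, ne_eq, Fin.ext_iff, xor_iff_iff_not, skipPivotEnds]
    split_ifs <;> omega

end FlippedPath

theorem stmt15_general (s t : ℕ) (ht : 6 ≤ t) {W : Type}
    (G : SimpleGraph W) (hG : IsSTPath s t G) :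
    ∃ H : SimpleGraph (Fin (s - 2)), IsSTPath (s - 2) (t - 6) H ∧ IsPivotMinorOf H G := by
  obtain ⟨i, hit, ⟨e⟩⟩ := hG
  refine ⟨_, ⟨i + 4, by omega, ⟨Iso.refl⟩⟩, ?_⟩
  have hpivot :
      (setFlip (pathGraph s) (consec s i t)).Adj ⟨i + 1, by omega⟩ ⟨i + 4, by omega⟩ := by
    simp only [flipPath_adj, mem_consec, ne_eq, Fin.ext_iff, xor_iff_iff_not]
    omega
  exact (isPivotMinorOf_of_isIndContained_pivot hpivot
    (flipPath_isIndContained_pivot hit ht)).trans_iso e.symm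

theorem stmt15 (s t : ℕ) (hts : t ≤ s) (ht : 6 ≤ t) {W : Type} [Fintype W]
    (G : SimpleGraph W) (hG : IsSTPath s t G) :
    ∃ H : SimpleGraph (Fin (s - 2)), IsSTPath (s - 2) (t - 6) H ∧ IsPivotMinorOf H G :=
  stmt15_general s t ht G hG
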